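/- arXiv:2304.14101 — 7 statements merged into one kernel-verified Lean document; each statement's English description precedes it below -/
import Mathlib

section
/- For non-empty subsets C₁, C₂ of a proper metric space M, the pair (C₁, C₂) is HBI (i.e., for all C₁' at finite Hausdorff distance from C₁ and C₂' at finite Hausdorff distance from C₂, the intersection C₁' ∩ C₂' is bounded) if and only if for every r ≥ 0 the intersection C₁ ∩ N̄_r(C₂) is bounded, where N̄_r(C) = {p ∈ M : ∃ c ∈ C, d(p,c) ≤ r}. -/
/-!
One direction is the case `C₁' = C₁`, `C₂' = N̄_r(C₂)`. For the other, if `C₁'` and `C₂'` lie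
within `s` of `C₁` and within `t` of `C₂`, then by the triangle inequality every point of
`C₁' ∩ C₂'` is `s`-close to a point of `C₁ ∩ N̄_{s+t}(C₂)`, and bounded sets have bounded
neighbourhoods.
-/

/-- The closed `r`-neighborhood of a subset `C` of a metric space. -/
def closedNbhd {M : Type*} [MetricSpace M] (C : Set M) (r : ℝ) : Set M :=
  {p | ∃ c ∈ C, dist p c ≤ r}

/-- Two subsets are equivalent (`∼`) if they are at finite Hausdorff distance. -/
def simSet {M : Type*} [MetricSpace M] (C₁ C₂ : Set M) : Prop :=
  ∃ r ≥ (0 : ℝ), C₁ ⊆ closedNbhd C₂ r ∧ C₂ ⊆ closedNbhd C₁ r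

/-- The pair `(C₁, C₂)` is HBI in `M`. -/
def IsHBI {M : Type*} [MetricSpace M] (C₁ C₂ : Set M) : Prop :=
  ∀ C₁' C₂' : Set M, simSet C₁ C₁' → simSet C₂ C₂' → Bornology.IsBounded (C₁' ∩ C₂')

section

variable {M : Type*} [MetricSpace M]

theorem subset_closedNbhd_self {C : Set M} {r : ℝ} (hr : 0 ≤ r) : C ⊆ closedNbhd C r :=
  fun p hp => ⟨p, hp, by rwa [dist_self]⟩

theorem closedNbhd_subset_cthickening (C : Set M) (r : ℝ) :
    closedNbhd C r ⊆ Metric.cthickening r C := by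
  rintro p ⟨c, hc, hpc⟩
  exact Metric.mem_cthickening_of_dist_le p c r C hc hpc

theorem Bornology.IsBounded.closedNbhd {C : Set M} (hC : Bornology.IsBounded C) (r : ℝ) :
    Bornology.IsBounded (closedNbhd C r) :=
  (hC.cthickening).subset (closedNbhd_subset_cthickening C r)

theorem simSet_refl (C : Set M) : simSet C C :=
  ⟨0, le_rfl, subset_closedNbhd_self le_rfl, subset_closedNbhd_self le_rfl⟩

theorem simSet_closedNbhd (C : Set M) {r : ℝ} (hr : 0 ≤ r) : simSet C (closedNbhd C r) :=
  ⟨r, hr, fun p hp => ⟨p, subset_closedNbhd_self hr hp, by rwa [dist_self]⟩, subset_rfl⟩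

theorem inter_subset_closedNbhd_inter_closedNbhd {C₁ C₂ C₁' C₂' : Set M} {s t : ℝ}
    (hs : C₁' ⊆ closedNbhd C₁ s) (ht : C₂' ⊆ closedNbhd C₂ t) :
    C₁' ∩ C₂' ⊆ closedNbhd (C₁ ∩ closedNbhd C₂ (s + t)) s := by
  rintro p ⟨hp₁, hp₂⟩
  obtain ⟨c₁, hc₁, hpc₁⟩ := hs hp₁
  obtain ⟨c₂, hc₂, hpc₂⟩ := ht hp₂
  refine ⟨c₁, ⟨hc₁, c₂, hc₂, ?_⟩, hpc₁⟩
  calc dist c₁ c₂ ≤ dist p c₁ + dist p c₂ := dist_triangle_left c₁ c₂ p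
    _ ≤ s + t := add_le_add hpc₁ hpc₂

end

theorem hbi_iff_inter_nbhd_bounded_general {M : Type*} [MetricSpace M]
    (C₁ C₂ : Set M) :
    IsHBI C₁ C₂ ↔ ∀ r ≥ (0 : ℝ), Bornology.IsBounded (C₁ ∩ closedNbhd C₂ r) := by
  constructor
  · intro hHBI r hr
    exact hHBI _ _ (simSet_refl C₁) (simSet_closedNbhd C₂ hr)
  · rintro hbdd C₁' C₂' ⟨s, hs, -, hC₁'⟩ ⟨t, ht, -, hC₂'⟩
    exact ((hbdd (s + t) (add_nonneg hs ht)).closedNbhd s).subset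
      (inter_subset_closedNbhd_inter_closedNbhd hC₁' hC₂')

theorem hbi_iff_inter_nbhd_bounded {M : Type*} [MetricSpace M] [ProperSpace M]
    (C₁ C₂ : Set M) (h₁ : C₁.Nonempty) (h₂ : C₂.Nonempty) :
    IsHBI C₁ C₂ ↔ ∀ r ≥ (0 : ℝ), Bornology.IsBounded (C₁ ∩ closedNbhd C₂ r) :=
  hbi_iff_inter_nbhd_bounded_general C₁ C₂
end

section
/- Let G be a locally compact Hausdorff topological group and H₁, H₂ non-empty subsets of G. Then the pair (H₁,H₂) is proper in G (i.e., for all compact D₁, D₂ ⊆ G the intersection (D₁·H₁·D₁⁻¹) ∩ (D₂·H₂·D₂⁻¹) is relatively compact) if and only if for every compact subset D of G the intersection H₁ ∩ (D·H₂·D⁻¹) is relatively compact in G. -/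
open scoped Pointwise

/-- `N̄_D(H) = D · H · D⁻¹` for subsets of a group. -/
def grpNbhd {G : Type*} [Group G] (D H : Set G) : Set G := D * H * D⁻¹

/-- A pair `(H₁, H₂)` of subsets of a topological group is proper in `G`. -/
def IsProperPair {G : Type*} [Group G] [TopologicalSpace G] (H₁ H₂ : Set G) : Prop :=
  ∀ D₁ D₂ : Set G, IsCompact D₁ → IsCompact D₂ →
    IsCompact (closure (grpNbhd D₁ H₁ ∩ grpNbhd D₂ H₂))

/-!
If `a h₁ b⁻¹ = c h₂ d⁻¹` with `a, b ∈ D₁`, `c, d ∈ D₂`, `h₁ ∈ H₁`, `h₂ ∈ H₂`, then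
`h₁ = (a⁻¹ c) h₂ (b⁻¹ d)⁻¹` lies in `H₁ ∩ N̄_D(H₂)` for the compact set `D = D₁⁻¹ D₂`, so
`N̄_{D₁}(H₁) ∩ N̄_{D₂}(H₂) ⊆ N̄_{D₁}(H₁ ∩ N̄_D(H₂))`. The right-hand side stays relatively compact
when `H₁ ∩ N̄_D(H₂)` is, since `(d₁, k, d₂) ↦ d₁ k d₂⁻¹` is continuous; the converse is the case
`D₁ = {1}`.
-/

section Group

variable {G : Type*} [Group G]

theorem mem_grpNbhd_iff {D H : Set G} {x : G} :
    x ∈ grpNbhd D H ↔ ∃ a ∈ D, ∃ h ∈ H, ∃ b ∈ D, a * h * b⁻¹ = x := by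
  simp only [grpNbhd, Set.mem_mul, Set.mem_inv]
  constructor
  · rintro ⟨_, ⟨a, ha, h, hh, rfl⟩, b, hb, rfl⟩
    exact ⟨a, ha, h, hh, b⁻¹, hb, by rw [inv_inv]⟩
  · rintro ⟨a, ha, h, hh, b, hb, rfl⟩
    exact ⟨a * h, ⟨a, ha, h, hh, rfl⟩, b⁻¹, by rwa [inv_inv], rfl⟩

@[simp]
theorem grpNbhd_one (H : Set G) : grpNbhd 1 H = H := by
  simp [grpNbhd]

theorem grpNbhd_mono {D H H' : Set G} (hH : H ⊆ H') : grpNbhd D H ⊆ grpNbhd D H' :=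
  Set.mul_subset_mul_right (Set.mul_subset_mul_left hH)

theorem inter_grpNbhd_subset_grpNbhd_inter (D₁ D₂ H₁ H₂ : Set G) :
    grpNbhd D₁ H₁ ∩ grpNbhd D₂ H₂ ⊆ grpNbhd D₁ (H₁ ∩ grpNbhd (D₁⁻¹ * D₂) H₂) := by
  rintro x ⟨hx₁, hx₂⟩
  obtain ⟨a, ha, h₁, hh₁, b, hb, rfl⟩ := mem_grpNbhd_iff.mp hx₁
  obtain ⟨c, hc, h₂, hh₂, d, hd, hx⟩ := mem_grpNbhd_iff.mp hx₂
  have hh₁_eq : (a⁻¹ * c) * h₂ * (b⁻¹ * d)⁻¹ = h₁ := by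
    calc (a⁻¹ * c) * h₂ * (b⁻¹ * d)⁻¹ = a⁻¹ * (c * h₂ * d⁻¹) * b := by group
      _ = h₁ := by rw [hx]; group
  have hD : ∀ {u v}, u ∈ D₁ → v ∈ D₂ → u⁻¹ * v ∈ D₁⁻¹ * D₂ := fun hu hv =>
    Set.mul_mem_mul (Set.inv_mem_inv.mpr hu) hv
  refine mem_grpNbhd_iff.mpr ⟨a, ha, h₁, ⟨hh₁, ?_⟩, b, hb, rfl⟩
  exact mem_grpNbhd_iff.mpr ⟨_, hD ha hc, h₂, hh₂, _, hD hb hd, hh₁_eq⟩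

end Group

theorem IsCompact.grpNbhd {G : Type*} [Group G] [TopologicalSpace G] [IsTopologicalGroup G]
    {D K : Set G} (hD : IsCompact D) (hK : IsCompact K) : IsCompact (grpNbhd D K) :=
  (hD.mul hK).mul hD.inv

theorem properPair_iff_general {G : Type*} [Group G] [TopologicalSpace G] [IsTopologicalGroup G]
    (H₁ H₂ : Set G) :
    IsProperPair H₁ H₂ ↔
      ∀ D : Set G, IsCompact D → IsCompact (closure (H₁ ∩ grpNbhd D H₂)) := by
  refine ⟨fun hp D hD => ?_, fun h D₁ D₂ hD₁ hD₂ => ?_⟩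
  · simpa using hp 1 D isCompact_singleton hD
  · have hK := h (D₁⁻¹ * D₂) (hD₁.inv.mul hD₂)
    refine (hD₁.grpNbhd hK).closure_of_subset ?_
    exact (inter_grpNbhd_subset_grpNbhd_inter D₁ D₂ H₁ H₂).trans (grpNbhd_mono subset_closure)

theorem properPair_iff {G : Type*} [Group G] [TopologicalSpace G] [IsTopologicalGroup G]
    [LocallyCompactSpace G] [T2Space G]
    (H₁ H₂ : Set G) (h₁ : H₁.Nonempty) (h₂ : H₂.Nonempty) :
    IsProperPair H₁ H₂ ↔
      ∀ D : Set G, IsCompact D → IsCompact (closure (H₁ ∩ grpNbhd D H₂)) :=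
  properPair_iff_general H₁ H₂
end

section
/- Let η : Ω → Ω' be a continuous, proper, surjective, non-expanding map between proper metric spaces such that for each x ∈ Ω and y' ∈ Ω' there exists y ∈ η⁻¹(y') with d(x,y) = d'(η(x), y'). Then for every non-empty subset C' of Ω' and every r ≥ 0, one has η⁻¹(N̄_r(C')) = N̄_r(η⁻¹(C')). -/
section

variable {Ω Ω' : Type*} [MetricSpace Ω] [MetricSpace Ω'] {η : Ω → Ω'}

theorem closedNbhd_preimage_subset_preimage_closedNbhd
    (hnonexp : ∀ x y : Ω, dist (η x) (η y) ≤ dist x y) (C' : Set Ω') (r : ℝ) :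
    closedNbhd (η ⁻¹' C') r ⊆ η ⁻¹' closedNbhd C' r := by
  rintro x ⟨c, hc, hxc⟩
  exact ⟨η c, hc, (hnonexp x c).trans hxc⟩

theorem preimage_closedNbhd_subset_closedNbhd_preimage
    (hfiber : ∀ (x : Ω) (y' : Ω'), ∃ y : Ω, η y = y' ∧ dist x y = dist (η x) y')
    (C' : Set Ω') (r : ℝ) :
    η ⁻¹' closedNbhd C' r ⊆ closedNbhd (η ⁻¹' C') r := by
  rintro x ⟨c', hc', hxc'⟩
  obtain ⟨y, rfl, hxy⟩ := hfiber x c'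
  exact ⟨y, hc', hxy ▸ hxc'⟩

end

theorem preimage_closedNbhd_general
    {Ω Ω' : Type*} [MetricSpace Ω] [MetricSpace Ω']
    (η : Ω → Ω')
    (hnonexp : ∀ x y : Ω, dist (η x) (η y) ≤ dist x y)
    (hfiber : ∀ (x : Ω) (y' : Ω'), ∃ y : Ω, η y = y' ∧ dist x y = dist (η x) y')
    (C' : Set Ω') (r : ℝ) :
    η ⁻¹' (closedNbhd C' r) = closedNbhd (η ⁻¹' C') r :=
  (preimage_closedNbhd_subset_closedNbhd_preimage hfiber C' r).antisymm
    (closedNbhd_preimage_subset_preimage_closedNbhd hnonexp C' r)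

theorem preimage_closedNbhd
    {Ω Ω' : Type*} [MetricSpace Ω] [ProperSpace Ω] [MetricSpace Ω'] [ProperSpace Ω']
    (η : Ω → Ω')
    (hcont : Continuous η)
    (hproper : ∀ K : Set Ω', IsCompact K → IsCompact (η ⁻¹' K))
    (hsurj : Function.Surjective η)
    (hnonexp : ∀ x y : Ω, dist (η x) (η y) ≤ dist x y)
    (hfiber : ∀ (x : Ω) (y' : Ω'), ∃ y : Ω, η y = y' ∧ dist x y = dist (η x) y')
    (C' : Set Ω') (hC' : C'.Nonempty) (r : ℝ) (hr : 0 ≤ r) :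
    η ⁻¹' (closedNbhd C' r) = closedNbhd (η ⁻¹' C') r :=
  preimage_closedNbhd_general η hnonexp hfiber C' r
end

section
/- Let η : Ω → Ω' be a continuous, proper, surjective, non-expanding map between proper metric spaces such that distances are achieved in fibers (for each x ∈ Ω and y' ∈ Ω' there is y ∈ η⁻¹(y') with d(x,y) = d'(η(x),y')). Define Θ(C) = η⁻¹(η(C)) for C ⊆ Ω. Then for non-empty subsets C₁, C₂ of Ω, the pair (Θ(C₁), Θ(C₂)) is HBI in Ω if and only if the pair (η(C₁), η(C₂)) is HBI in Ω'. -/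
/-- A pair `(A, B)` of subsets of a metric space is HBI if `A ∩ N̄_r(B)` is
bounded for every `r ≥ 0`. -/
def IsHBIPair {M : Type*} [MetricSpace M] (A B : Set M) : Prop :=
  ∀ r ≥ (0 : ℝ), Bornology.IsBounded (A ∩ closedNbhd B r)

open Bornology

section

variable {α β : Type*} [MetricSpace α] [MetricSpace β] {f : α → β}

theorem closedNbhd_preimage_subset (hf : LipschitzWith 1 f) (B : Set β) (r : ℝ) :
    closedNbhd (f ⁻¹' B) r ⊆ f ⁻¹' closedNbhd B r := by
  rintro x ⟨y, hy, hxy⟩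
  refine ⟨f y, hy, le_trans ?_ hxy⟩
  simpa only [NNReal.coe_one, one_mul] using hf.dist_le_mul x y

theorem image_inter_closedNbhd_subset
    (hfiber : ∀ (x : α) (y' : β), ∃ y : α, f y = y' ∧ dist x y ≤ dist (f x) y')
    (C : Set α) (B : Set β) (r : ℝ) :
    f '' C ∩ closedNbhd B r ⊆ f '' (C ∩ closedNbhd (f ⁻¹' B) r) := by
  rintro _ ⟨⟨x, hx, rfl⟩, y', hy', hxy'⟩
  obtain ⟨y, rfl, hxy⟩ := hfiber x y'
  exact ⟨x, ⟨hx, y, hy', hxy.trans hxy'⟩, rfl⟩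

theorem isBounded_preimage_of_isCompact_preimage [ProperSpace β]
    (hf : ∀ K : Set β, IsCompact K → IsCompact (f ⁻¹' K)) {s : Set β} (hs : IsBounded s) :
    IsBounded (f ⁻¹' s) :=
  (hf _ hs.isCompact_closure).isBounded.subset (Set.preimage_mono subset_closure)

end

theorem theta_HBI_iff_image_HBI_general
    {Ω Ω' : Type*} [MetricSpace Ω] [MetricSpace Ω'] [ProperSpace Ω']
    (η : Ω → Ω')
    (hproper : ∀ K : Set Ω', IsCompact K → IsCompact (η ⁻¹' K))
    (hnonexp : ∀ x y : Ω, dist (η x) (η y) ≤ dist x y)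
    (hfiber : ∀ (x : Ω) (y' : Ω'), ∃ y : Ω, η y = y' ∧ dist x y = dist (η x) y')
    (C₁ C₂ : Set Ω) :
    IsHBIPair (η ⁻¹' (η '' C₁)) (η ⁻¹' (η '' C₂)) ↔ IsHBIPair (η '' C₁) (η '' C₂) := by
  have hη : LipschitzWith 1 η := .mk_one hnonexp
  constructor
  · intro h r hr
    refine (hη.isBounded_image (h r hr)).subset ?_
    refine (image_inter_closedNbhd_subset (fun x y' => ?_) C₁ _ r).trans ?_
    · exact (hfiber x y').imp fun _ hy => ⟨hy.1, hy.2.le⟩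
    · exact Set.image_mono (Set.inter_subset_inter_left _ (Set.subset_preimage_image η C₁))
  · intro h r hr
    refine (isBounded_preimage_of_isCompact_preimage hproper (h r hr)).subset ?_
    exact Set.inter_subset_inter_right _ (closedNbhd_preimage_subset hη _ r)

theorem theta_HBI_iff_image_HBI
    {Ω Ω' : Type*} [MetricSpace Ω] [ProperSpace Ω] [MetricSpace Ω'] [ProperSpace Ω']
    (η : Ω → Ω')
    (hcont : Continuous η)
    (hproper : ∀ K : Set Ω', IsCompact K → IsCompact (η ⁻¹' K))
    (hsurj : Function.Surjective η)
    (hnonexp : ∀ x y : Ω, dist (η x) (η y) ≤ dist x y)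
    (hfiber : ∀ (x : Ω) (y' : Ω'), ∃ y : Ω, η y = y' ∧ dist x y = dist (η x) y')
    (C₁ C₂ : Set Ω) (h₁ : C₁.Nonempty) (h₂ : C₂.Nonempty) :
    IsHBIPair (η ⁻¹' (η '' C₁)) (η ⁻¹' (η '' C₂)) ↔ IsHBIPair (η '' C₁) (η '' C₂) :=
  theta_HBI_iff_image_HBI_general η hproper hnonexp hfiber C₁ C₂
end

section
/- Let G be a locally compact Hausdorff group acting continuously, properly, isometrically and transitively on a proper metric space (M,d) with base point * and isotropy group K. For non-empty subsets H₁, H₂ of G: if S^{H₁}(*) ∼ S^{H₂}(*) in M (finite Hausdorff distance), then H₁ ∼ H₂ in G (i.e., there is a compact D ⊆ G with H₁ ⊆ D·H₂·D⁻¹ and H₂ ⊆ D·H₁·D⁻¹). -/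
open scoped Pointwise

/-! The compact set `D` is `{g | d(g•*, *) ≤ r}`, where `r` bounds the Hausdorff distance: it is
compact by properness of the action, and if `g•*` lies within `r` of `kh•*` then
`g = k · h · ((kh)⁻¹g)` with `k ∈ D` and `(kh)⁻¹g ∈ D⁻¹` by isometry. -/

section IsometricAction

variable {G M : Type*} [Group G] [MulAction G M]

lemma isCompact_setOf_dist_smul_le [TopologicalSpace G] [PseudoMetricSpace M] [ProperSpace M]
    [ContinuousSMul G M]
    (hproper : ∀ D : Set M, IsCompact D →
      IsCompact {g : G | ((fun x : M => g • x) '' D ∩ D).Nonempty})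
    (x : M) {r : ℝ} (hr : 0 ≤ r) :
    IsCompact {g : G | dist (g • x) x ≤ r} := by
  have hclosed : IsClosed {g : G | dist (g • x) x ≤ r} :=
    isClosed_le ((continuous_id.smul continuous_const).dist continuous_const) continuous_const
  refine (hproper _ (isCompact_closedBall x r)).of_isClosed_subset hclosed fun g hg => ?_
  exact ⟨g • x, Set.mem_image_of_mem _ (Metric.mem_closedBall_self hr), hg⟩

variable [MetricSpace M] [IsIsometricSMul G M]

lemma dist_inv_mul_smul_self (g h : G) (x : M) :
    dist ((g⁻¹ * h) • x) x = dist (h • x) (g • x) := by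
  rw [← dist_smul g, smul_smul, mul_inv_cancel_left]

lemma subset_mul_mul_inv_of_orbit_subset_closedNbhd {x : M} {r : ℝ} (hr : 0 ≤ r)
    {H₁ H₂ : Set G}
    (hsub : (fun g : G => g • x) '' ({k : G | k • x = x} * H₁) ⊆
      closedNbhd ((fun g : G => g • x) '' ({k : G | k • x = x} * H₂)) r) :
    H₁ ⊆ {g : G | dist (g • x) x ≤ r} * H₂ * {g : G | dist (g • x) x ≤ r}⁻¹ := by
  intro g hg
  obtain ⟨_, ⟨_, ⟨k, hk, h, hh, rfl⟩, rfl⟩, hdist⟩ :=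
    hsub ⟨1 * g, Set.mul_mem_mul (one_smul G x) hg, by rw [one_mul]⟩
  have hkD : k ∈ {g : G | dist (g • x) x ≤ r} := by
    rwa [Set.mem_ofPred_eq, hk, dist_self]
  have hdD : g⁻¹ * (k * h) ∈ {g : G | dist (g • x) x ≤ r} := by
    rwa [Set.mem_ofPred_eq, dist_inv_mul_smul_self, dist_comm]
  have hmem := Set.mul_mem_mul (Set.mul_mem_mul hkD hh) (Set.inv_mem_inv.mpr hdD)
  rwa [mul_inv_rev, inv_inv, mul_inv_cancel_left] at hmem

end IsometricAction

theorem sim_in_G_of_sim_SH_general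
    {G : Type*} [Group G] [TopologicalSpace G]
    {M : Type*} [MetricSpace M] [ProperSpace M] [MulAction G M]
    (hcont : Continuous fun p : G × M => p.1 • p.2)
    (hisom : ∀ g : G, Isometry fun x : M => g • x)
    (hproper : ∀ D : Set M, IsCompact D →
      IsCompact {g : G | ((fun x : M => g • x) '' D ∩ D).Nonempty})
    (star : M) (H₁ H₂ : Set G)
    (hsim : simSet
      ((fun g : G => g • star) '' ({k : G | k • star = star} * H₁))
      ((fun g : G => g • star) '' ({k : G | k • star = star} * H₂))) :
    ∃ D : Set G, IsCompact D ∧ H₁ ⊆ D * H₂ * D⁻¹ ∧ H₂ ⊆ D * H₁ * D⁻¹ := by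
  have : ContinuousSMul G M := ⟨hcont⟩
  have : IsIsometricSMul G M := ⟨hisom⟩
  obtain ⟨r, hr, h₁₂, h₂₁⟩ := hsim
  exact ⟨_, isCompact_setOf_dist_smul_le hproper star hr,
    subset_mul_mul_inv_of_orbit_subset_closedNbhd hr h₁₂,
    subset_mul_mul_inv_of_orbit_subset_closedNbhd hr h₂₁⟩

theorem sim_in_G_of_sim_SH
    {G : Type*} [Group G] [TopologicalSpace G] [IsTopologicalGroup G]
    [LocallyCompactSpace G] [T2Space G]
    {M : Type*} [MetricSpace M] [ProperSpace M] [MulAction G M]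
    (hcont : Continuous fun p : G × M => p.1 • p.2)
    (hisom : ∀ g : G, Isometry fun x : M => g • x)
    (hproper : ∀ D : Set M, IsCompact D →
      IsCompact {g : G | ((fun x : M => g • x) '' D ∩ D).Nonempty})
    (htrans : ∀ x y : M, ∃ g : G, g • x = y)
    (star : M) (H₁ H₂ : Set G) (h₁ : H₁.Nonempty) (h₂ : H₂.Nonempty)
    (hsim : simSet
      ((fun g : G => g • star) '' ({k : G | k • star = star} * H₁))
      ((fun g : G => g • star) '' ({k : G | k • star = star} * H₂))) :
    ∃ D : Set G, IsCompact D ∧ H₁ ⊆ D * H₂ * D⁻¹ ∧ H₂ ⊆ D * H₁ * D⁻¹ :=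
  sim_in_G_of_sim_SH_general hcont hisom hproper star H₁ H₂ hsim
end

section
/- Let G be a group acting isometrically and transitively on a proper metric space (M,d) satisfying Property (S): for each r ≥ 0 there exists τ(r) ≥ 0 such that for any p₀, p, q ∈ M with d(p,p₀) ≤ r, there is g ∈ G with g·p = p₀ and d(q, g·q) ≤ τ(r). Then for any base point *, any non-empty closed subset H of G, and any r ≥ 0, there exists τ ≥ 0 such that π⁻¹(N̄_r(*))·π(H) ⊆ N̄_τ(K·H·*), where π(g) = g·* and K is the isotropy group at *. -/
open scoped Pointwise

/-! Property (S) with `p₀ = *`, `p = g • *` and `q = g • h • *` yields `g'` with `g' • g • * = *`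
that moves `g • h • *` by at most `τ(r)`; then `g' * g ∈ K`, so `g • h • *` lies within `τ(r)` of
`(g' * g * h) • * ∈ π(K * H)`. -/

theorem mem_closedNbhd_singleton {M : Type*} [MetricSpace M] {p c : M} {r : ℝ} :
    p ∈ closedNbhd {c} r ↔ dist p c ≤ r := by
  simp [closedNbhd]

theorem smul_smul_mem_closedNbhd_image_stabilizer_mul {G M : Type*} [Group G] [MetricSpace M]
    [MulAction G M] {star : M} {H : Set G} {g g' h : G} {τ : ℝ}
    (hg' : g' • g • star = star) (hh : h ∈ H) (hdist : dist (g • h • star) (g' • g • h • star) ≤ τ) :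
    g • h • star ∈ closedNbhd ((fun k : G => k • star) '' ({k : G | k • star = star} * H)) τ := by
  have hstab : g' * g ∈ {k : G | k • star = star} := by
    simpa only [Set.mem_ofPred_eq, mul_smul] using hg'
  refine ⟨(g' * g * h) • star, ⟨g' * g * h, Set.mul_mem_mul hstab hh, rfl⟩, ?_⟩
  simpa only [mul_smul] using hdist

theorem SH_ball_subset_nbhd_general
    {G : Type*} [Group G]
    {M : Type*} [MetricSpace M] [MulAction G M]
    -- Property (S)
    (hS : ∀ r ≥ (0 : ℝ), ∃ τ ≥ (0 : ℝ), ∀ p₀ p q : M, dist p p₀ ≤ r →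
      ∃ g : G, g • p = p₀ ∧ dist q (g • q) ≤ τ)
    (star : M) (H : Set G)
    (r : ℝ) (hr : 0 ≤ r) :
    ∃ τ ≥ (0 : ℝ),
      {x : M | ∃ g : G, g • star ∈ closedNbhd {star} r ∧ ∃ h ∈ H, x = g • (h • star)}
        ⊆ closedNbhd ((fun g : G => g • star) '' ({k : G | k • star = star} * H)) τ := by
  obtain ⟨τ, hτ, hSr⟩ := hS r hr
  refine ⟨τ, hτ, ?_⟩
  rintro x ⟨g, hg, h, hh, rfl⟩
  obtain ⟨g', hg', hdist⟩ := hSr star (g • star) (g • h • star) (mem_closedNbhd_singleton.mp hg)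
  exact smul_smul_mem_closedNbhd_image_stabilizer_mul hg' hh hdist

theorem SH_ball_subset_nbhd
    {G : Type*} [Group G] [TopologicalSpace G]
    {M : Type*} [MetricSpace M] [ProperSpace M] [MulAction G M]
    (hisom : ∀ g : G, Isometry fun x : M => g • x)
    (htrans : ∀ x y : M, ∃ g : G, g • x = y)
    -- Property (S)
    (hS : ∀ r ≥ (0 : ℝ), ∃ τ ≥ (0 : ℝ), ∀ p₀ p q : M, dist p p₀ ≤ r →
      ∃ g : G, g • p = p₀ ∧ dist q (g • q) ≤ τ)
    (star : M) (H : Set G) (hHcl : IsClosed H) (hH : H.Nonempty)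
    (r : ℝ) (hr : 0 ≤ r) :
    ∃ τ ≥ (0 : ℝ),
      {x : M | ∃ g : G, g • star ∈ closedNbhd {star} r ∧ ∃ h ∈ H, x = g • (h • star)}
        ⊆ closedNbhd ((fun g : G => g • star) '' ({k : G | k • star = star} * H)) τ :=
  SH_ball_subset_nbhd_general hS star H r hr
end

section
/- Let Ω be a proper CAT(0) space with an isometric action of a group G, and M a closed G-orbit in Ω. Suppose there exists b ≥ 0 such that for any p, q ∈ M there is a geodesic ray c issuing from p with min_{t≥0} d(q, c(t)) ≤ b and such that the stabilizer in G of the asymptote class c(∞) acts transitively on M. Then M has Property (S): for each r ≥ 0 there exists τ(r) ≥ 0 (one may take τ(r) = r + 2b) such that for any p₀, p, q ∈ M with d(p,p₀) ≤ r, there exists g ∈ G with g·p = p₀ and d(q, g·q) ≤ τ(r). -/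
/-- A geodesic ray: isometric on `[0, ∞)`. -/
def IsGeodesicRay {Ω : Type*} [MetricSpace Ω] (c : ℝ → Ω) : Prop :=
  ∀ s t : ℝ, 0 ≤ s → 0 ≤ t → dist (c s) (c t) = |s - t|

/-- Two geodesic rays are asymptotic if they stay at bounded distance. -/
def AsymptoticRays {Ω : Type*} [MetricSpace Ω] (c c' : ℝ → Ω) : Prop :=
  ∃ a : ℝ, ∀ t : ℝ, 0 ≤ t → dist (c t) (c' t) ≤ a

/-- A geodesic segment from `x` to `y`, affinely parametrized on `[0,1]`. -/
def IsGeodesicSegment {Ω : Type*} [MetricSpace Ω] (γ : ℝ → Ω) (x y : Ω) : Prop :=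
  γ 0 = x ∧ γ 1 = y ∧ ∀ s t : ℝ, s ∈ Set.Icc (0 : ℝ) 1 → t ∈ Set.Icc (0 : ℝ) 1 →
    dist (γ s) (γ t) = |s - t| * dist x y

/-- A CAT(0) space: a geodesic metric space in which every geodesic triangle is at
least as thin as its Euclidean comparison triangle (comparison inequality in the
equivalent quadratic form). -/
def IsCAT0 (Ω : Type*) [MetricSpace Ω] : Prop :=
  (∀ x y : Ω, ∃ γ : ℝ → Ω, IsGeodesicSegment γ x y) ∧
  ∀ (x y z : Ω) (γ : ℝ → Ω), IsGeodesicSegment γ y z → ∀ t ∈ Set.Icc (0 : ℝ) 1,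
    dist x (γ t) ^ 2 ≤
      (1 - t) * dist x y ^ 2 + t * dist x z ^ 2 - t * (1 - t) * dist y z ^ 2

/-!
Take a ray `c` from `p` passing within `b` of `q`, and `g` in the stabilizer of `c(∞)` with
`g • p = p₀`. Then `g • c` is a ray asymptotic to `c`. In a CAT(0) space the distance between two
geodesics is convex, so between asymptotic rays it is a bounded convex function of `t ≥ 0`, hence
nonincreasing. Therefore `g` moves every `c t` by at most `d(g • p, p) = d(p₀, p) ≤ r`, and moves
`q` by at most `r + 2b`.
-/

open Set Filter Topology

section

variable {Ω : Type*} [MetricSpace Ω]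

namespace IsGeodesicSegment

variable {γ : ℝ → Ω} {x y : Ω}

lemma symm (h : IsGeodesicSegment γ x y) : IsGeodesicSegment (fun s => γ (1 - s)) y x := by
  obtain ⟨h0, h1, hd⟩ := h
  refine ⟨by simpa using h1, by simpa using h0, fun s t hs ht => ?_⟩
  have hs' : 1 - s ∈ Icc (0 : ℝ) 1 := ⟨by linarith [hs.2], by linarith [hs.1]⟩
  have ht' : 1 - t ∈ Icc (0 : ℝ) 1 := ⟨by linarith [ht.2], by linarith [ht.1]⟩
  rw [hd _ _ hs' ht', dist_comm x y, show (1 - s) - (1 - t) = t - s by ring, abs_sub_comm]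

lemma dist_start (h : IsGeodesicSegment γ x y) {t : ℝ} (ht : t ∈ Icc (0 : ℝ) 1) :
    dist (γ t) x = t * dist x y := by
  have := h.2.2 t 0 ht ⟨le_rfl, zero_le_one⟩
  rwa [h.1, sub_zero, abs_of_nonneg ht.1] at this

end IsGeodesicSegment

lemma IsGeodesicRay.comp_isometry {Ω' : Type*} [MetricSpace Ω'] {f : Ω → Ω'} (hf : Isometry f)
    {c : ℝ → Ω} (hc : IsGeodesicRay c) : IsGeodesicRay (f ∘ c) := fun s t hs ht => by
  simpa [hf.dist_eq] using hc s t hs ht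

lemma IsGeodesicRay.isGeodesicSegment_rescale {c : ℝ → Ω} (hc : IsGeodesicRay c) {T : ℝ}
    (hT : 0 ≤ T) : IsGeodesicSegment (fun s => c (s * T)) (c 0) (c T) := by
  refine ⟨by simp, by simp, fun s t hs ht => ?_⟩
  rw [hc _ _ (mul_nonneg hs.1 hT) (mul_nonneg ht.1 hT), hc 0 T le_rfl hT, zero_sub, abs_neg,
    ← sub_mul, abs_mul, abs_of_nonneg hT]

namespace IsCAT0

variable (hΩ : IsCAT0 Ω)
include hΩ

/-- The comparison inequality applied twice: to `y₁` against `σ`, then to `σ t` against `τ`. -/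
lemma dist_le_mul_of_isGeodesicSegment_of_common_start {σ τ : ℝ → Ω} {x x₁ y₁ : Ω}
    (hσ : IsGeodesicSegment σ x x₁) (hτ : IsGeodesicSegment τ x y₁) {t : ℝ}
    (ht : t ∈ Icc (0 : ℝ) 1) : dist (σ t) (τ t) ≤ t * dist x₁ y₁ := by
  have hy₁σ := hΩ.2 y₁ x x₁ σ hσ t ht
  have hστ := hΩ.2 (σ t) x y₁ τ hτ t ht
  rw [hσ.dist_start ht, dist_comm (σ t) y₁] at hστ
  rw [dist_comm y₁ x, dist_comm y₁ x₁] at hy₁σ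
  have hsq : dist (σ t) (τ t) ^ 2 ≤ (t * dist x₁ y₁) ^ 2 := by
    nlinarith [mul_le_mul_of_nonneg_left hy₁σ ht.1, ht.1, ht.2]
  exact (pow_le_pow_iff_left₀ dist_nonneg (mul_nonneg ht.1 dist_nonneg) two_ne_zero).1 hsq

/-- Compare both segments with the diagonal from `x₀` to `y₁`. -/
lemma dist_le_of_isGeodesicSegment {α β : ℝ → Ω} {x₀ x₁ y₀ y₁ : Ω}
    (hα : IsGeodesicSegment α x₀ x₁) (hβ : IsGeodesicSegment β y₀ y₁) {t : ℝ}
    (ht : t ∈ Icc (0 : ℝ) 1) :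
    dist (α t) (β t) ≤ (1 - t) * dist x₀ y₀ + t * dist x₁ y₁ := by
  obtain ⟨γ, hγ⟩ := hΩ.1 x₀ y₁
  have ht' : 1 - t ∈ Icc (0 : ℝ) 1 := ⟨by linarith [ht.2], by linarith [ht.1]⟩
  have hαγ := hΩ.dist_le_mul_of_isGeodesicSegment_of_common_start hα hγ ht
  have hγβ := hΩ.dist_le_mul_of_isGeodesicSegment_of_common_start hγ.symm hβ.symm ht'
  simp only [sub_sub_cancel] at hγβ
  linarith [dist_triangle (α t) (γ t) (β t)]

/-- The distance between asymptotic rays is nonincreasing: on `[0, T]` it is bounded by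
the chord of a convex function whose value at `T` stays bounded as `T → ∞`. -/
lemma dist_le_dist_zero_of_asymptoticRays {c c' : ℝ → Ω} (hc : IsGeodesicRay c)
    (hc' : IsGeodesicRay c') (hasym : AsymptoticRays c c') {t : ℝ} (ht : 0 ≤ t) :
    dist (c t) (c' t) ≤ dist (c 0) (c' 0) := by
  obtain ⟨a, ha⟩ := hasym
  have hchord : ∀ T ≥ max t 1, dist (c t) (c' t) ≤ dist (c 0) (c' 0) + t * a / T := by
    intro T hT
    have hT₀ : 0 < T := lt_of_lt_of_le one_pos (le_of_max_le_right hT)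
    have htT : t / T ∈ Icc (0 : ℝ) 1 :=
      ⟨div_nonneg ht hT₀.le, (div_le_one hT₀).2 (le_of_max_le_left hT)⟩
    have hconv := hΩ.dist_le_of_isGeodesicSegment (hc.isGeodesicSegment_rescale hT₀.le)
      (hc'.isGeodesicSegment_rescale hT₀.le) htT
    simp only [div_mul_cancel₀ t hT₀.ne'] at hconv
    have hfar := mul_le_mul_of_nonneg_left (ha T hT₀.le) htT.1
    have hnear := mul_nonneg htT.1 (dist_nonneg (x := c 0) (y := c' 0))
    rw [mul_div_right_comm]
    linarith
  have hlim :
      Tendsto (fun T => dist (c 0) (c' 0) + t * a / T) atTop (𝓝 (dist (c 0) (c' 0))) := by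
    simpa using tendsto_const_nhds.add (tendsto_const_nhds.div_atTop (tendsto_id (α := ℝ)))
  exact ge_of_tendsto hlim (eventually_ge_atTop (max t 1) |>.mono hchord)

end IsCAT0

end

theorem propertyS_of_ray_stabilizer_transitive_general
    {Ω : Type*} [MetricSpace Ω] (hΩ : IsCAT0 Ω)
    {G : Type*} [Group G] [MulAction G Ω]
    (hisom : ∀ g : G, Isometry fun x : Ω => g • x)
    (M : Set Ω)
    (b : ℝ)
    (hray : ∀ p ∈ M, ∀ q ∈ M, ∃ c : ℝ → Ω, IsGeodesicRay c ∧ c 0 = p ∧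
      (∃ t : ℝ, 0 ≤ t ∧ dist q (c t) ≤ b) ∧
      -- the stabilizer `P_{c(∞)}` of the asymptote class of `c` acts transitively on `M`
      (∀ x ∈ M, ∀ y ∈ M, ∃ g : G,
        AsymptoticRays (fun t => g • c t) c ∧ g • x = y)) :
    -- Property (S) with `τ(r) = r + 2b`
    ∀ r ≥ (0 : ℝ), ∀ p₀ ∈ M, ∀ p ∈ M, ∀ q ∈ M, dist p p₀ ≤ r →
      ∃ g : G, g • p = p₀ ∧ dist q (g • q) ≤ r + 2 * b := by
  intro r _ p₀ hp₀ p hp q hq hpp₀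
  obtain ⟨c, hc, hc0, ⟨t, ht, hqc⟩, htrans⟩ := hray p hp q hq
  obtain ⟨g, hasym, hgp⟩ := htrans p hp p₀ hp₀
  refine ⟨g, hgp, ?_⟩
  have hmove : dist (g • c t) (c t) ≤ r := calc
    dist (g • c t) (c t) ≤ dist (g • c 0) (c 0) :=
      hΩ.dist_le_dist_zero_of_asymptoticRays (hc.comp_isometry (hisom g)) hc hasym ht
    _ = dist p p₀ := by rw [hc0, hgp, dist_comm]
    _ ≤ r := hpp₀
  have hgqc : dist (g • c t) (g • q) = dist q (c t) := by rw [(hisom g).dist_eq, dist_comm]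
  calc dist q (g • q) ≤ dist q (c t) + dist (c t) (g • c t) + dist (g • c t) (g • q) :=
        dist_triangle4 _ _ _ _
    _ ≤ r + 2 * b := by rw [hgqc, dist_comm (c t)]; linarith

theorem propertyS_of_ray_stabilizer_transitive
    {Ω : Type*} [MetricSpace Ω] [ProperSpace Ω] (hΩ : IsCAT0 Ω)
    {G : Type*} [Group G] [MulAction G Ω]
    (hisom : ∀ g : G, Isometry fun x : Ω => g • x)
    (M : Set Ω) (hMorbit : ∃ x : Ω, M = MulAction.orbit G x) (hMcl : IsClosed M)
    (b : ℝ) (hb : 0 ≤ b)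
    (hray : ∀ p ∈ M, ∀ q ∈ M, ∃ c : ℝ → Ω, IsGeodesicRay c ∧ c 0 = p ∧
      (∃ t : ℝ, 0 ≤ t ∧ dist q (c t) ≤ b) ∧
      -- the stabilizer `P_{c(∞)}` of the asymptote class of `c` acts transitively on `M`
      (∀ x ∈ M, ∀ y ∈ M, ∃ g : G,
        AsymptoticRays (fun t => g • c t) c ∧ g • x = y)) :
    -- Property (S) with `τ(r) = r + 2b`
    ∀ r ≥ (0 : ℝ), ∀ p₀ ∈ M, ∀ p ∈ M, ∀ q ∈ M, dist p p₀ ≤ r →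
      ∃ g : G, g • p = p₀ ∧ dist q (g • q) ≤ r + 2 * b :=
  propertyS_of_ray_stabilizer_transitive_general hΩ hisom M b hray
end
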